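/- Define g : ℂ → ℂ by g(z) = z·(2|z| − |z|²). Then for every z₀ ∈ ℂ with |z₀| = 1, g is real-Fréchet-differentiable at z₀, its real Fréchet derivative L = Dg(z₀) : ℂ → ℂ is complex-linear (i.e. L(c·v) = c·L(v) for all c, v ∈ ℂ; equivalently ∂̄g(z₀) = 0), and the determinant of L regarded as an ℝ-linear endomorphism of ℂ equals 1 (i.e. the real Jacobian J_g(z₀) = 1). -/

import Mathlib

/-! Write `g(z) = r(z) · z` with the radial factor `r(z) = 2|z| − |z|²`. Since `t ↦ 2t − t²` is
stationary at `t = 1`, `r` is stationary on the unit circle, where moreover `r = 1`; hence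
`Dg(z₀) = r(z₀) · id = id` there, which is complex-linear with determinant `1`. -/

/-- The symbol of the Example: `g(z) = z·(2|z| − |z|²)`. -/
noncomputable def exampleSymbol (z : ℂ) : ℂ :=
  z * ((2 * ‖z‖ - (‖z‖) ^ 2 : ℝ) : ℂ)

theorem hasFDerivAt_comp_norm_zero {E : Type*} [NormedAddCommGroup E] [InnerProductSpace ℝ E]
    {h : ℝ → ℝ} {z₀ : E} (hz₀ : z₀ ≠ 0) (hh : HasDerivAt h 0 ‖z₀‖) :
    HasFDerivAt (fun z : E => h ‖z‖) (0 : E →L[ℝ] ℝ) z₀ := by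
  have hnorm := ((contDiffAt_norm (n := 1) ℝ hz₀).differentiableAt one_ne_zero).hasFDerivAt
  exact (hh.comp_hasFDerivAt z₀ hnorm).congr_fderiv (by simp)

theorem HasFDerivAt.smul_self_of_zero {E : Type*} [NormedAddCommGroup E] [NormedSpace ℝ E]
    {r : E → ℝ} {z₀ : E} (hr : HasFDerivAt r (0 : E →L[ℝ] ℝ) z₀) :
    HasFDerivAt (fun z => r z • z) (r z₀ • ContinuousLinearMap.id ℝ E) z₀ :=
  (hr.smul (hasFDerivAt_id z₀)).congr_fderiv (by simp)

theorem hasDerivAt_two_mul_sub_sq_one : HasDerivAt (fun t : ℝ => 2 * t - t ^ 2) 0 1 :=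
  (((hasDerivAt_id (1 : ℝ)).const_mul 2).sub ((hasDerivAt_id (1 : ℝ)).pow 2)).congr_deriv
    (by norm_num)

theorem exampleSymbol_eq_smul : exampleSymbol = fun z => (2 * ‖z‖ - ‖z‖ ^ 2) • z := by
  funext z
  simp [exampleSymbol, Complex.real_smul, mul_comm]

theorem hasFDerivAt_exampleSymbol {z₀ : ℂ} (hz₀ : ‖z₀‖ = 1) :
    HasFDerivAt exampleSymbol (ContinuousLinearMap.id ℝ ℂ) z₀ := by
  have hr : HasFDerivAt (fun z : ℂ => 2 * ‖z‖ - ‖z‖ ^ 2) (0 : ℂ →L[ℝ] ℝ) z₀ :=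
    hasFDerivAt_comp_norm_zero (norm_ne_zero_iff.mp (by simp [hz₀]))
      (hz₀ ▸ hasDerivAt_two_mul_sub_sq_one)
  rw [exampleSymbol_eq_smul]
  exact hr.smul_self_of_zero.congr_fderiv (by norm_num [hz₀])

/-- At every point of the unit circle, `g` is real-differentiable, its real Fréchet
derivative is complex-linear (`∂̄g = 0`), and its real Jacobian determinant equals `1`. -/
theorem projected_composition_stmt14 (z₀ : ℂ) (hz₀ : ‖z₀‖ = 1) :
    DifferentiableAt ℝ exampleSymbol z₀ ∧
    (∀ c v : ℂ, fderiv ℝ exampleSymbol z₀ (c * v) = c * fderiv ℝ exampleSymbol z₀ v) ∧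
    LinearMap.det ((fderiv ℝ exampleSymbol z₀ : ℂ →L[ℝ] ℂ) : ℂ →ₗ[ℝ] ℂ) = 1 := by
  have hg := hasFDerivAt_exampleSymbol hz₀
  refine ⟨hg.differentiableAt, fun c v => ?_, ?_⟩ <;> simp [hg.fderiv]
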